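/- Every Hausdorff locally compact ring topology on the ring I of finite-image endomorphisms is discrete. Equivalently, I does not admit a nondiscrete Hausdorff locally compact ring topology. -/

import Mathlib

/-!
Let `e N` be the projection onto the coordinates `≤ N`. Every finite-image endomorphism `z`
satisfies `e N * z = z` for some `N`, so the closed additive subgroups `{z | e N * z = z}` cover
the ring, and by Baire's theorem one of them is open. Composing `e N` with the shift by `N + 1`
gives an `x` with `e N * x = 0`; then the left annihilator of `x` is the preimage of that open
subgroup under `z ↦ x * z`, and it meets the subgroup only in `0` since the shift is injective.
So `{0}` is open.
-/

/-- The (nonunital) ring of endomorphisms with finite image of the countable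
elementary abelian `p`-group `ℕ →₀ ZMod p`. -/
def finRangeEndSubring (p : ℕ) : NonUnitalSubring (Module.End (ZMod p) (ℕ →₀ ZMod p)) where
  carrier := {α : Module.End (ZMod p) (ℕ →₀ ZMod p) | (Set.range α).Finite}
  zero_mem' := (Set.finite_singleton 0).subset (by rintro _ ⟨x, rfl⟩; simp)
  add_mem' {a b} ha hb := (Set.Finite.image2 (· + ·) ha hb).subset
    (by rintro _ ⟨x, rfl⟩
        exact Set.mem_image2_of_mem ⟨x, rfl⟩ ⟨x, rfl⟩)
  neg_mem' {a} ha := (ha.image Neg.neg).subset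
    (by rintro _ ⟨x, rfl⟩; exact ⟨a x, ⟨x, rfl⟩, rfl⟩)
  mul_mem' {a b} ha hb := ha.subset (by rintro _ ⟨x, rfl⟩; exact ⟨b x, rfl⟩)

open Set

@[to_additive]
theorem Subgroup.exists_isOpen_of_iUnion_eq_univ {G ι : Type*} [Group G] [TopologicalSpace G]
    [SeparatelyContinuousMul G] [BaireSpace G] [Countable ι] (H : ι → Subgroup G)
    (hclosed : ∀ i, IsClosed (H i : Set G)) (hcover : ⋃ i, (H i : Set G) = univ) :
    ∃ i, IsOpen (H i : Set G) := by
  obtain ⟨i, g, hg⟩ := nonempty_interior_of_iUnion_of_closed hclosed hcover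
  exact ⟨i, (H i).isOpen_of_mem_nhds (mem_interior_iff_mem_nhds.1 hg)⟩

section LeftFixed

variable {R : Type*} [NonUnitalNonAssocRing R]

def leftFixed (e : R) : AddSubgroup R where
  carrier := {z | e * z = z}
  zero_mem' := mul_zero e
  add_mem' {a b} ha hb := by rw [mem_ofPred_eq, mul_add, ha, hb]
  neg_mem' {a} ha := by rw [mem_ofPred_eq, mul_neg, ha]

@[simp]
theorem mem_leftFixed {e z : R} : z ∈ leftFixed e ↔ e * z = z :=
  Iff.rfl

theorem isClosed_leftFixed [TopologicalSpace R] [SeparatelyContinuousMul R] [T2Space R] (e : R) :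
    IsClosed (leftFixed e : Set R) :=
  isClosed_eq (continuous_const_mul e) continuous_id

end LeftFixed

section Annihilator

variable {R : Type*} [NonUnitalRing R] [TopologicalSpace R] [SeparatelyContinuousMul R]

theorem isOpen_setOf_mul_eq_zero {e x : R} (he : IsOpen (leftFixed e : Set R)) (hex : e * x = 0) :
    IsOpen {z | x * z = 0} := by
  have : {z | x * z = 0} = (x * ·) ⁻¹' (leftFixed e : Set R) := by
    ext z
    simp [← mul_assoc, hex, eq_comm]
  exact this ▸ he.preimage (continuous_const_mul x)

theorem discreteTopology_of_forall_exists_mul_eq_self [SeparatelyContinuousAdd R] [T2Space R]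
    [BaireSpace R] {ι : Type*} [Countable ι] (e : ι → R) (hcover : ∀ z, ∃ i, e i * z = z)
    (hsep : ∀ i, ∃ x, e i * x = 0 ∧ ∀ z, e i * z = z → x * z = 0 → z = 0) :
    DiscreteTopology R := by
  obtain ⟨i, hopen⟩ := AddSubgroup.exists_isOpen_of_iUnion_eq_univ (fun i => leftFixed (e i))
    (fun i => isClosed_leftFixed (e i)) (eq_univ_of_forall fun z => mem_iUnion.2 (hcover z))
  obtain ⟨x, hex, hx⟩ := hsep i
  have hzero : (leftFixed (e i) : Set R) ∩ {z | x * z = 0} = {0} :=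
    Subset.antisymm (fun z hz => hx z hz.1 hz.2) (by simp)
  exact discreteTopology_of_isOpen_singleton_zero
    (hzero ▸ hopen.inter (isOpen_setOf_mul_eq_zero hopen hex))

end Annihilator

namespace Finsupp

variable (R M : Type*) [Semiring R] [AddCommMonoid M] [Module R M]

noncomputable def truncation (N : ℕ) : Module.End R (ℕ →₀ M) :=
  (supported M R (Iic N)).subtype ∘ₗ restrictDom M R (Iic N)

variable {R M}

theorem finite_range_truncation [Finite M] (N : ℕ) : (range (truncation R M N)).Finite := by
  have : Finite (supported M R (Iic N)) :=
    .of_equiv _ ((supportedEquivFinsupp (Iic N)).toEquiv.trans equivFunOnFinite).symm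
  exact (Set.finite_range (supported M R (Iic N)).subtype).subset
    fun _ ⟨f, hf⟩ => ⟨restrictDom M R (Iic N) f, hf⟩

theorem exists_truncation_mul_eq_self {z : Module.End R (ℕ →₀ M)} (hz : (range z).Finite) :
    ∃ N, truncation R M N * z = z := by
  obtain ⟨N, hN⟩ := (hz.biUnion fun f _ => f.support.finite_toSet).bddAbove
  refine ⟨N, LinearMap.ext fun v => (filter_eq_self_iff _ _).2 fun m hm => hN ?_⟩
  exact mem_biUnion (mem_range_self v) (mem_support_iff.2 hm)

theorem truncation_mul_lmapDomain_add (N : ℕ) :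
    truncation R M N * lmapDomain M R (· + (N + 1)) = 0 := by
  refine LinearMap.ext fun f => (filter_eq_zero_iff _ _).2 fun m hm => ?_
  refine mapDomain_of_notMem_range _ _ ?_
  rintro ⟨k, rfl⟩
  have : k + (N + 1) ≤ N := hm
  omega

end Finsupp

open Finsupp

theorem mul_mem_finRangeEndSubring {p : ℕ} (a : Module.End (ZMod p) (ℕ →₀ ZMod p))
    {z : Module.End (ZMod p) (ℕ →₀ ZMod p)} (hz : z ∈ finRangeEndSubring p) :
    a * z ∈ finRangeEndSubring p :=
  (range_comp a z ▸ Finite.image a hz : (range (a ∘ z)).Finite)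

/-- Every Hausdorff locally compact ring topology on the ring of finite-image
endomorphisms of a countable elementary abelian `p`-group is discrete. -/
theorem finRangeEnd_locallyCompact_discrete (p : ℕ) [Fact p.Prime]
    (t : TopologicalSpace (finRangeEndSubring p))
    (htr : @IsTopologicalRing (finRangeEndSubring p) t _)
    (ht2 : @T2Space (finRangeEndSubring p) t)
    (hlc : @LocallyCompactSpace (finRangeEndSubring p) t) :
    @DiscreteTopology (finRangeEndSubring p) t := by
  let e (N : ℕ) : finRangeEndSubring p := ⟨truncation _ _ N, finite_range_truncation N⟩
  refine discreteTopology_of_forall_exists_mul_eq_self e (fun z => ?_) (fun N => ?_)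
  · obtain ⟨N, hN⟩ := exists_truncation_mul_eq_self z.2
    exact ⟨N, Subtype.ext hN⟩
  let shift : Module.End (ZMod p) (ℕ →₀ ZMod p) := lmapDomain _ _ (· + (N + 1))
  have hshift : truncation _ _ N * shift = 0 := truncation_mul_lmapDomain_add N
  refine ⟨⟨shift * truncation _ _ N, mul_mem_finRangeEndSubring _ (e N).2⟩,
    Subtype.ext ?_, fun z hz hxz => Subtype.ext ?_⟩
  · change truncation _ _ N * (shift * truncation _ _ N) = 0
    rw [← mul_assoc, hshift, zero_mul]
  · have hz' : truncation _ _ N * z.1 = z.1 := congrArg Subtype.val hz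
    have hshift_z : shift * z.1 = 0 := by
      rw [← hz', ← mul_assoc]
      exact congrArg Subtype.val hxz
    exact (LinearMap.cancel_left (mapDomain_injective (add_left_injective _))).1
      (hshift_z.trans (LinearMap.comp_zero shift).symm)
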